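/- Let G be a weighted undirected graph, let s1, s2 be two vertices, and let R = (z_0 = s1, z_1, …, z_k) be a shortest path from s1 to some vertex t. Then the function i ↦ dist(s1, z_i) − dist(s2, z_i) is nondecreasing in i. -/

import Mathlib

/-!
Split the shortest path at `z_i` and `z_j` into `q₁ · q₂ · q₃`. Minimality of the whole path
forces `dist s1 z_j - dist s1 z_i ≥ weight q₂`, while the triangle inequality gives
`dist s2 z_j - dist s2 z_i ≤ weight q₂`.
-/

def walkWeight {V : Type} {G : SimpleGraph V} (w : Sym2 V → ℝ) {a b : V} (p : G.Walk a b) : ℝ :=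
  (p.edges.map w).sum

open SimpleGraph

section WalkWeight

variable {V : Type} {G : SimpleGraph V} (w : Sym2 V → ℝ)

lemma walkWeight_append {a b c : V} (p : G.Walk a b) (q : G.Walk b c) :
    walkWeight w (p.append q) = walkWeight w p + walkWeight w q := by
  simp [walkWeight, Walk.edges_append]

variable {w} {dist : V → V → ℝ}
  (hdist : ∀ a b : V, IsLeast {x : ℝ | ∃ p : G.Walk a b, walkWeight w p = x} (dist a b))

include hdist

lemma dist_le_walkWeight {a b : V} (p : G.Walk a b) : dist a b ≤ walkWeight w p :=
  (hdist a b).2 ⟨p, rfl⟩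

lemma dist_le_dist_add_walkWeight (a : V) {b c : V} (q : G.Walk b c) :
    dist a c ≤ dist a b + walkWeight w q := by
  obtain ⟨p, hp⟩ := (hdist a b).1
  calc dist a c ≤ walkWeight w (p.append q) := dist_le_walkWeight hdist _
    _ = dist a b + walkWeight w q := by rw [walkWeight_append, hp]

lemma dist_sub_dist_le_of_append {s₁ s₂ x y t : V} (q₁ : G.Walk s₁ x) (q₂ : G.Walk x y)
    (q₃ : G.Walk y t)
    (hq : walkWeight w q₁ + walkWeight w q₂ + walkWeight w q₃ = dist s₁ t) :
    dist s₁ x - dist s₂ x ≤ dist s₁ y - dist s₂ y := by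
  have h₁ := dist_le_walkWeight hdist q₁
  have h₂ := dist_le_dist_add_walkWeight hdist s₂ q₂
  have h₃ := dist_le_dist_add_walkWeight hdist s₁ q₃
  linarith

end WalkWeight

theorem stmt4_general {V : Type} (G : SimpleGraph V) (w : Sym2 V → ℝ)
    (dist : V → V → ℝ)
    (hdist : ∀ a b : V, IsLeast {x : ℝ | ∃ p : G.Walk a b, walkWeight w p = x} (dist a b))
    (s1 s2 t : V) (p : G.Walk s1 t) (hp : walkWeight w p = dist s1 t)
    (i j : ℕ) (hij : i ≤ j) (hj : j < p.support.length) :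
    dist s1 (p.support.get ⟨i, lt_of_le_of_lt hij hj⟩)
        - dist s2 (p.support.get ⟨i, lt_of_le_of_lt hij hj⟩) ≤
      dist s1 (p.support.get ⟨j, hj⟩) - dist s2 (p.support.get ⟨j, hj⟩) := by
  simp only [List.get_eq_getElem, Walk.support_getElem_eq_getVert]
  set r := p.drop i
  have hsplit : walkWeight w (p.take i) + walkWeight w (r.take (j - i))
      + walkWeight w (r.drop (j - i)) = dist s1 t := by
    rw [add_assoc, ← walkWeight_append, Walk.append_take_drop_eq, ← walkWeight_append,
      Walk.append_take_drop_eq, hp]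
  have key := dist_sub_dist_le_of_append hdist (s₂ := s2) _ _ _ hsplit
  rwa [Walk.drop_getVert, Nat.add_sub_cancel' hij] at key

/-- Along a shortest path `R = (z_0 = s1, …, z_k = t)` from `s1`, the function
`i ↦ dist s1 z_i - dist s2 z_i` is nondecreasing. -/
theorem stmt4 {V : Type} (G : SimpleGraph V) (w : Sym2 V → ℝ)
    (hw : ∀ e, 0 ≤ w e)
    (dist : V → V → ℝ)
    (hdist : ∀ a b : V, IsLeast {x : ℝ | ∃ p : G.Walk a b, walkWeight w p = x} (dist a b))
    (s1 s2 t : V) (p : G.Walk s1 t) (hp : walkWeight w p = dist s1 t)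
    (i j : ℕ) (hij : i ≤ j) (hj : j < p.support.length) :
    dist s1 (p.support.get ⟨i, lt_of_le_of_lt hij hj⟩)
        - dist s2 (p.support.get ⟨i, lt_of_le_of_lt hij hj⟩) ≤
      dist s1 (p.support.get ⟨j, hj⟩) - dist s2 (p.support.get ⟨j, hj⟩) :=
  stmt4_general G w dist hdist s1 s2 t p hp i j hij hj
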